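/- arXiv:2211.08510 — 2 statements merged into one kernel-verified Lean document; each statement's English description precedes it below -/
import Mathlib

section
/- Let k be a field of characteristic 0 and r ≥ 1. The set of products p₁^{ρ₁}···p_r^{ρ_r} · z₁^{a₁}···z_r^{a_r}, where p_j is the j-th Newton power sum in r variables, 0 ≤ a_i < i, and Σ_i i·ρ_i + Σ_i a_i = r, forms a basis of the vector space of homogeneous polynomials of degree r in k[z₁,…,z_r]. -/
/-!
Artin's theorem: over the subalgebra generated by the elementary symmetric functions of
`x₀, …, x_{n-1}`, the algebra generated by the `xᵢ` is spanned by the monomials `∏ xᵢ ^ aᵢ` with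
`aᵢ ≤ i`. Adding the variables one at a time, the new variable `xₙ` is a root of `∏_{i ≤ n} (T - xᵢ)`,
a monic polynomial of degree `n + 1` whose coefficients are elementary symmetric in `x₀, …, xₙ`,
and the elementary symmetric functions of `x₀, …, x_{n-1}` are polynomials in `xₙ` and those of
`x₀, …, xₙ`. In characteristic zero Newton's identities express the elementary symmetric
polynomials through the power sums `p₁, …, p_r`, and taking homogeneous components of degree `r`
shows that the family spans. It is independent by counting: `bᵢ = (i + 1) ρᵢ + aᵢ` with `aᵢ ≤ i`
is division with remainder, so the family is indexed by the exponents of the monomials of degree `r`.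
-/

open MvPolynomial Finset Submodule Subalgebra

namespace Multiset

theorem esymm_cons_succ {R : Type*} [CommSemiring R] (a : R) (s : Multiset R) (k : ℕ) :
    (a ::ₘ s).esymm (k + 1) = s.esymm (k + 1) + a * s.esymm k := by
  simp [esymm, powersetCard_cons, sum_map_mul_left]

variable {R A : Type*} [CommRing R] [CommRing A] [Algebra R A]

theorem esymm_mem_adjoin_insert_esymm_cons (a : A) (s : Multiset A) (k : ℕ) :
    s.esymm k ∈ Algebra.adjoin R (insert a (Set.range (a ::ₘ s).esymm)) := by
  induction k with
  | zero => simp [esymm]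
  | succ k ih =>
    rw [eq_sub_of_add_eq (esymm_cons_succ a s k).symm]
    exact sub_mem (Algebra.subset_adjoin (Set.mem_insert_of_mem _ ⟨_, rfl⟩))
      (mul_mem (Algebra.subset_adjoin (Set.mem_insert _ _)) ih)

theorem pow_card_mem_mul_span_pow {s : Multiset A} {a : A} (ha : a ∈ s) :
    a ^ card s ∈ toSubmodule (Algebra.adjoin R (Set.range s.esymm)) *
      span R ((a ^ ·) '' Set.Iio (card s)) := by
  have hroot := congrArg (Polynomial.eval a) (prod_X_sub_X_eq_sum_esymm s)
  rw [Polynomial.eval_multiset_prod, prod_eq_zero (by simpa using ⟨a, ha, sub_self a⟩),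
    Polynomial.eval_finsetSum, sum_range_succ'] at hroot
  have h0 : s.esymm 0 = 1 := by simp [esymm]
  simp only [h0, Polynomial.eval_mul, Polynomial.eval_pow, Polynomial.eval_neg, Polynomial.eval_one,
    Polynomial.eval_C, Polynomial.eval_X, pow_zero, one_mul, Nat.sub_zero] at hroot
  rw [eq_neg_of_add_eq_zero_right hroot.symm]
  refine neg_mem (sum_mem fun j hj => ?_)
  rw [← mul_assoc]
  refine mul_mem_mul ((mem_toSubmodule _).2 (mul_mem (pow_mem (neg_mem (one_mem _)) _)
    (Algebra.subset_adjoin ⟨_, rfl⟩))) (subset_span ⟨_, ?_, rfl⟩)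
  rw [Finset.mem_range] at hj
  exact Set.mem_Iio.2 (by omega)

end Multiset

theorem Fin.univ_val_map_eq_cons_init {α : Type*} {n : ℕ} (x : Fin (n + 1) → α) :
    univ.val.map x = x (Fin.last n) ::ₘ univ.val.map (Fin.init x) := by
  rw [Fin.univ_val_map, Fin.univ_val_map, List.ofFn_succ', List.concat_eq_append,
    Multiset.cons_coe, Multiset.coe_eq_coe]
  exact List.perm_append_singleton _ _

section Artin

variable {R A : Type*} [CommSemiring R] [CommSemiring A] [Algebra R A]

def artinMonomials {n : ℕ} (x : Fin n → A) : Set A :=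
  {y | ∃ a : Fin n → ℕ, (∀ i, a i ≤ i) ∧ ∏ i, x i ^ a i = y}

theorem span_artinMonomials_init_mul_span_pow_le {n : ℕ} (x : Fin (n + 1) → A) :
    span R (artinMonomials (Fin.init x)) * span R ((x (Fin.last n) ^ ·) '' Set.Iio (n + 1)) ≤
      span R (artinMonomials x) := by
  rw [span_mul_span]
  refine span_mono ?_
  rintro _ ⟨_, ⟨a, ha, rfl⟩, _, ⟨k, hk, rfl⟩, rfl⟩
  refine ⟨Fin.snoc a k, fun i => ?_, ?_⟩
  · induction i using Fin.lastCases with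
    | last => simpa using Nat.lt_succ_iff.1 hk
    | cast i => simpa using ha i
  · simp [Fin.prod_univ_castSucc, Fin.init]

theorem Algebra.toSubmodule_adjoin_singleton_le_mul_span_pow {S : Subalgebra R A} {a : A}
    {d : ℕ} (h : a ^ d ∈ toSubmodule S * span R ((a ^ ·) '' Set.Iio d)) :
    toSubmodule (adjoin R {a}) ≤ toSubmodule S * span R ((a ^ ·) '' Set.Iio d) := by
  set P := span R ((a ^ ·) '' Set.Iio d)
  have hP : P ≤ toSubmodule S * P := by
    simpa using mul_le_mul_left (one_le.2 (one_mem S)) P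
  have hstep : span R {a} * (toSubmodule S * P) ≤ toSubmodule S * P := by
    have haP : span R {a} * P ≤ P ⊔ span R {a ^ d} := by
      rw [span_mul_span, ← span_union]
      refine span_mono ?_
      rintro _ ⟨b, hb, _, ⟨k, hk, rfl⟩, rfl⟩
      rw [Set.mem_singleton_iff.1 hb]
      change a * a ^ k ∈ _
      rw [← pow_succ']
      rcases (Nat.succ_le_of_lt hk).lt_or_eq with hk | rfl
      · exact .inl ⟨k + 1, hk, rfl⟩
      · exact .inr rfl
    calc span R {a} * (toSubmodule S * P) = toSubmodule S * (span R {a} * P) := by ring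
      _ ≤ toSubmodule S * (toSubmodule S * P) :=
        mul_le_mul_right (haP.trans (sup_le hP (span_le.2 (by simpa using h)))) _
      _ = toSubmodule S * P := by rw [← mul_assoc, (isIdempotentElem_toSubmodule S).eq]
  rw [adjoin_eq_span, ← Submonoid.powers_eq_closure, span_le]
  rintro _ ⟨j, rfl⟩
  change a ^ j ∈ toSubmodule S * P
  rcases lt_or_ge j d with hj | hj
  · exact hP (subset_span ⟨j, hj, rfl⟩)
  · induction j, hj using Nat.le_induction with
    | base => exact h
    | succ j _ ih => rw [pow_succ']; exact hstep (mul_mem_mul (mem_span_singleton_self a) ih)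

end Artin

theorem Algebra.toSubmodule_adjoin_range_le_mul_span_artinMonomials {R A : Type*} [CommRing R]
    [CommRing A] [Algebra R A] {n : ℕ} (x : Fin n → A) :
    toSubmodule (adjoin R (Set.range x)) ≤
      toSubmodule (adjoin R (Set.range (univ.val.map x).esymm)) * span R (artinMonomials x) := by
  induction n with
  | zero =>
    rw [Set.range_eq_empty, adjoin_empty, toSubmodule_bot, Submodule.one_le, ← mul_one 1]
    exact mul_mem_mul (one_mem (adjoin R _)) (subset_span ⟨0, by simp, by simp⟩)
  | succ n ih =>
    set a := x (Fin.last n)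
    set E := adjoin R (Set.range (univ.val.map x).esymm)
    set P := span R ((a ^ ·) '' Set.Iio (n + 1))
    have hE : IsIdempotentElem (toSubmodule E) := isIdempotentElem_toSubmodule E
    have ha : IsIdempotentElem (toSubmodule (adjoin R {a})) := isIdempotentElem_toSubmodule _
    have hrange : Set.range x = {a} ∪ Set.range (Fin.init x) := by
      conv_lhs => rw [← Fin.snoc_init_self x]
      rw [Fin.range_snoc, Set.insert_eq]
    have hcons := Fin.univ_val_map_eq_cons_init x
    have hinit : toSubmodule (adjoin R (Set.range (univ.val.map (Fin.init x)).esymm)) ≤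
        toSubmodule (adjoin R {a}) * toSubmodule E := by
      rw [mul_toSubmodule, ← adjoin_union, ← Set.insert_eq, hcons]
      exact toSubmodule.monotone (adjoin_le (Set.range_subset_iff.2
        (Multiset.esymm_mem_adjoin_insert_esymm_cons a _)))
    have hpow : toSubmodule (adjoin R {a}) ≤ toSubmodule E * P := by
      refine toSubmodule_adjoin_singleton_le_mul_span_pow ?_
      have := Multiset.pow_card_mem_mul_span_pow (R := R) (s := univ.val.map x) (a := a)
        (by rw [hcons]; exact Multiset.mem_cons_self _ _)
      rwa [Multiset.card_map, Finset.card_val, Finset.card_univ, Fintype.card_fin] at this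
    calc toSubmodule (adjoin R (Set.range x))
        = toSubmodule (adjoin R (Set.range (Fin.init x))) * toSubmodule (adjoin R {a}) := by
          rw [hrange, adjoin_union, mul_toSubmodule, sup_comm]
      _ ≤ toSubmodule (adjoin R {a}) * toSubmodule E * span R (artinMonomials (Fin.init x)) *
            toSubmodule (adjoin R {a}) :=
        mul_le_mul_left ((ih _).trans (mul_le_mul_left hinit _)) _
      _ = toSubmodule E * span R (artinMonomials (Fin.init x)) *
            (toSubmodule (adjoin R {a}) * toSubmodule (adjoin R {a})) := by ring
      _ ≤ toSubmodule E * span R (artinMonomials (Fin.init x)) * (toSubmodule E * P) := by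
        rw [ha.eq]; exact mul_le_mul_right hpow _
      _ = toSubmodule E * toSubmodule E * (span R (artinMonomials (Fin.init x)) * P) := by ring
      _ ≤ toSubmodule E * span R (artinMonomials x) := by
        rw [hE.eq]; exact mul_le_mul_right (span_artinMonomials_init_mul_span_pow_le x) _

noncomputable def weightedDivModEquiv {ι : Type*} [Fintype ι] (w : ι → ℕ) (hw : ∀ i, 0 < w i)
    (n : ℕ) :
    {q : (ι → ℕ) × (ι → ℕ) // (∀ i, q.2 i < w i) ∧ ∑ i, w i * q.1 i + ∑ i, q.2 i = n} ≃
      {d : ι →₀ ℕ // d.degree = n} where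
  toFun q := ⟨Finsupp.equivFunOnFinite.symm fun i => w i * q.1.1 i + q.1.2 i, by
    simp [Finsupp.degree_eq_sum, sum_add_distrib, q.2.2]⟩
  invFun d := ⟨(fun i => d.1 i / w i, fun i => d.1 i % w i), fun i => Nat.mod_lt _ (hw i), by
    simp [← sum_add_distrib, Nat.div_add_mod, ← Finsupp.degree_eq_sum, d.2]⟩
  left_inv q := by
    ext i
    · simp [Nat.mul_add_div (hw i), Nat.div_eq_of_lt (q.2.1 i)]
    · simp [Nat.mod_eq_of_lt (q.2.1 i)]
  right_inv d := by ext i; simp [Nat.div_add_mod]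

namespace MvPolynomial

theorem esymm_eq_zero_of_card_lt {σ R : Type*} [CommSemiring R] [Fintype σ] {k : ℕ}
    (hk : Fintype.card σ < k) : esymm σ R k = 0 := by
  rw [esymm, powersetCard_eq_empty.2 (by rwa [card_univ]), sum_empty]

theorem esymm_mem_of_psum_mem {σ K : Type*} [Fintype σ] [Field K] [CharZero K]
    {S : Subalgebra K (MvPolynomial σ K)}
    (hS : ∀ j, 0 < j → j ≤ Fintype.card σ → psum σ K j ∈ S) (k : ℕ) : esymm σ K k ∈ S := by
  induction k using Nat.strong_induction_on with
  | _ k ih =>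
  rcases Nat.eq_zero_or_pos k with rfl | hk0
  · rw [esymm_zero]; exact one_mem S
  rcases lt_or_ge (Fintype.card σ) k with hk | hk
  · rw [esymm_eq_zero_of_card_lt hk]; exact zero_mem S
  have hmul : (k : MvPolynomial σ K) * esymm σ K k ∈ S := by
    rw [mul_esymm_eq_sum]
    refine mul_mem (pow_mem (neg_mem (one_mem S)) _) (sum_mem fun a ha => ?_)
    obtain ⟨hak, ha1⟩ := mem_filter.1 ha
    have ha2 : a.1 + a.2 = k := mem_antidiagonal.1 hak
    exact mul_mem (mul_mem (pow_mem (neg_mem (one_mem S)) _) (ih _ ha1))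
      (hS _ (by omega) (by omega))
  have hdiv : esymm σ K k = C (k : K)⁻¹ * ((k : MvPolynomial σ K) * esymm σ K k) := by
    rw [← map_natCast C, ← mul_assoc, ← map_mul, inv_mul_cancel₀ (Nat.cast_ne_zero.2 hk0.ne'),
      map_one, one_mul]
  rw [hdiv]
  exact mul_mem (S.algebraMap_mem _) hmul

theorem homogeneousSubmodule_le_span_image {σ R ι : Type*} [CommSemiring R]
    {g : ι → MvPolynomial σ R} {deg : ι → ℕ} {s : Set ι}
    (hg : ∀ i ∈ s, (g i).IsHomogeneous (deg i)) (hspan : ⊤ ≤ span R (g '' s)) (n : ℕ) :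
    homogeneousSubmodule σ R n ≤ span R (g '' {i | i ∈ s ∧ deg i = n}) := by
  intro f hf
  have hfn : homogeneousComponent n f = f := by simp [homogeneousComponent_of_mem hf]
  have hmap := mem_map_of_mem (f := homogeneousComponent n) (hspan (mem_top (x := f)))
  rw [map_span, hfn] at hmap
  refine span_le.2 ?_ hmap
  rintro _ ⟨_, ⟨i, hi, rfl⟩, rfl⟩
  rw [SetLike.mem_coe, homogeneousComponent_of_mem (hg i hi)]
  split_ifs with hdeg
  · exact subset_span ⟨i, ⟨hi, hdeg.symm⟩, rfl⟩
  · exact zero_mem _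

theorem finrank_homogeneousSubmodule {σ R : Type*} [Finite σ] [CommRing R] [Nontrivial R]
    (n : ℕ) :
    Module.finrank R (homogeneousSubmodule σ R n) = Nat.card {d : σ →₀ ℕ // d.degree = n} := by
  have := (Finsupp.finite_of_degree_eq (σ := σ) n).fintype
  rw [(LinearEquiv.ofEq _ _ (homogeneousSubmodule_eq_finsupp_supported σ R n) ≪≫ₗ
    AddMonoidAlgebra.supportedEquivFinsupp _).finrank_eq, Module.finrank_finsupp_self,
    Fintype.card_eq_nat_card]
  rfl

variable (K : Type*) [Field K] (r : ℕ)

noncomputable def psumArtinProduct (q : (Fin r → ℕ) × (Fin r → ℕ)) : MvPolynomial (Fin r) K :=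
  (∏ i : Fin r, psum (Fin r) K ((i : ℕ) + 1) ^ q.1 i) * ∏ i : Fin r, X i ^ q.2 i

theorem isHomogeneous_psumArtinProduct (q : (Fin r → ℕ) × (Fin r → ℕ)) :
    (psumArtinProduct K r q).IsHomogeneous
      (∑ i : Fin r, ((i : ℕ) + 1) * q.1 i + ∑ i : Fin r, q.2 i) := by
  have hpsum (j : ℕ) : (psum (Fin r) K j).IsHomogeneous j :=
    IsHomogeneous.sum _ _ _ fun i _ => isHomogeneous_X_pow i j
  exact (IsHomogeneous.prod _ _ _ fun i _ => (hpsum _).pow _).mul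
    (IsHomogeneous.prod _ _ _ fun i _ => isHomogeneous_X_pow i _)

theorem top_le_span_psumArtinProduct [CharZero K] :
    ⊤ ≤ span K (psumArtinProduct K r '' {q | ∀ i, q.2 i < (i : ℕ) + 1}) := by
  set psumAlg := Algebra.adjoin K (Set.range fun i : Fin r => psum (Fin r) K ((i : ℕ) + 1))
  have hesymm : Algebra.adjoin K (Set.range (univ.val.map (X : Fin r → _)).esymm) ≤ psumAlg := by
    rw [← esymm_eq_multiset_esymm]
    refine Algebra.adjoin_le (Set.range_subset_iff.2 (esymm_mem_of_psum_mem fun j hj hjr => ?_))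
    rw [Fintype.card_fin] at hjr
    exact Algebra.subset_adjoin ⟨⟨j - 1, by omega⟩, by simp only; congr; omega⟩
  calc ⊤ = toSubmodule (Algebra.adjoin K (Set.range (X : Fin r → MvPolynomial (Fin r) K))) := by
        rw [adjoin_range_X, Algebra.top_toSubmodule]
    _ ≤ toSubmodule psumAlg * span K (artinMonomials X) :=
      (Algebra.toSubmodule_adjoin_range_le_mul_span_artinMonomials X).trans
        (mul_le_mul_left (toSubmodule.monotone hesymm) _)
    _ ≤ _ := by
      rw [Algebra.adjoin_eq_span, span_mul_span]
      refine span_mono ?_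
      rintro _ ⟨_, hp, _, ⟨a, ha, rfl⟩, rfl⟩
      obtain ⟨ρ, rfl⟩ := Submonoid.mem_closure_range_iff_of_fintype.1 hp
      exact ⟨(ρ, a), fun i => Nat.lt_succ_of_le (ha i), rfl⟩


theorem span_psumArtinProduct_eq_homogeneousSubmodule [CharZero K] :
    span K (psumArtinProduct K r '' {q | (∀ i : Fin r, q.2 i < (i : ℕ) + 1) ∧
      ∑ i : Fin r, ((i : ℕ) + 1) * q.1 i + ∑ i : Fin r, q.2 i = r}) =
      homogeneousSubmodule (Fin r) K r := by
  refine le_antisymm (span_le.2 ?_) (homogeneousSubmodule_le_span_image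
    (fun q _ => isHomogeneous_psumArtinProduct K r q) (top_le_span_psumArtinProduct K r) r)
  rintro _ ⟨q, hq, rfl⟩
  simpa [hq.2] using isHomogeneous_psumArtinProduct K r q

end MvPolynomial

/-- Here `i : Fin r` stands for the index `i + 1`: `p` with index `i` is the power sum `p_{i+1}`,
and the exponent conditions of the paper read `a i ≤ i` and `Σ (i + 1) ρ i + Σ a i = r`. -/
theorem stmt4_general (K : Type*) [Field K] [CharZero K] (r : ℕ) :
    LinearIndependent K
        (fun p : {q : (Fin r → ℕ) × (Fin r → ℕ) //
            (∀ i : Fin r, q.2 i < (i : ℕ) + 1) ∧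
            (∑ i : Fin r, ((i : ℕ) + 1) * q.1 i) + (∑ i : Fin r, q.2 i) = r} =>
          (∏ i : Fin r, psum (Fin r) K ((i : ℕ) + 1) ^ p.val.1 i) *
            ∏ i : Fin r, X i ^ p.val.2 i) ∧
      Submodule.span K
          (Set.range fun p : {q : (Fin r → ℕ) × (Fin r → ℕ) //
              (∀ i : Fin r, q.2 i < (i : ℕ) + 1) ∧
              (∑ i : Fin r, ((i : ℕ) + 1) * q.1 i) + (∑ i : Fin r, q.2 i) = r} =>
            (∏ i : Fin r, psum (Fin r) K ((i : ℕ) + 1) ^ p.val.1 i) *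
              ∏ i : Fin r, X i ^ p.val.2 i) =
        homogeneousSubmodule (Fin r) K r := by
  have hspan := span_psumArtinProduct_eq_homogeneousSubmodule K r
  rw [Set.image_eq_range] at hspan
  let e := weightedDivModEquiv (fun i : Fin r => (i : ℕ) + 1) (fun _ => Nat.succ_pos _) r
  have : Fintype {d : Fin r →₀ ℕ // d.degree = r} := (Finsupp.finite_of_degree_eq r).fintype
  have := Fintype.ofEquiv _ e.symm
  refine ⟨linearIndependent_iff_card_eq_finrank_span.2 ?_, hspan⟩
  rw [Fintype.card_eq_nat_card, Nat.card_congr e, ← finrank_homogeneousSubmodule (R := K)]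
  exact congrArg (fun M : Submodule K _ => Module.finrank K M) hspan.symm

/-- the products `p₁^{ρ₁} ⋯ p_r^{ρ_r} · z₁^{a₁} ⋯ z_r^{a_r}` with `0 ≤ a_i < i`
and `Σ_i i·ρ_i + Σ_i a_i = r` form a basis of the space of homogeneous polynomials of
degree `r` in `k[z₁,…,z_r]`.  Here `i : Fin r` stands for the index `i+1`, so `p` with index
`i` is the power sum `p_{i+1}` and the exponent conditions read `a i ≤ i` and
`Σ (i+1)·ρ i + Σ a i = r`. -/
theorem stmt4 (K : Type*) [Field K] [CharZero K] (r : ℕ) (hr : 1 ≤ r) :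
    LinearIndependent K
        (fun p : {q : (Fin r → ℕ) × (Fin r → ℕ) //
            (∀ i : Fin r, q.2 i < (i : ℕ) + 1) ∧
            (∑ i : Fin r, ((i : ℕ) + 1) * q.1 i) + (∑ i : Fin r, q.2 i) = r} =>
          (∏ i : Fin r, psum (Fin r) K ((i : ℕ) + 1) ^ p.val.1 i) *
            ∏ i : Fin r, X i ^ p.val.2 i) ∧
      Submodule.span K
          (Set.range fun p : {q : (Fin r → ℕ) × (Fin r → ℕ) //
              (∀ i : Fin r, q.2 i < (i : ℕ) + 1) ∧
              (∑ i : Fin r, ((i : ℕ) + 1) * q.1 i) + (∑ i : Fin r, q.2 i) = r} =>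
            (∏ i : Fin r, psum (Fin r) K ((i : ℕ) + 1) ^ p.val.1 i) *
              ∏ i : Fin r, X i ^ p.val.2 i) =
        homogeneousSubmodule (Fin r) K r :=
  stmt4_general K r
end

section
/- Let k be a field of characteristic 0 and let λ̄ = (λ₁,…,λ_r), μ̄ = (μ₁,…,μ_r) ∈ k^r. Define an action of the operators e_j (j ≥ 1) on k[z₁,…,z_r] by e_j·(z₁^{a₁}···z_r^{a_r}) = (Σ_{i=1}^r (a_i + μ_i + (j+1)λ_i)·z_i^j)·z₁^{a₁}···z_r^{a_r}. Then these operators satisfy [e_j, e_m] = (m−j)e_{j+m}, i.e., this defines an L₁-module structure on k[z₁,…,z_r]. -/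
/-!
With `D_i = z_i ∂/∂z_i` (which multiplies `z^a` by `a_i`), the operator is
`e_j = Σ_i z_i^j (μ_i + (j+1)λ_i + D_i)`. Summands with different `i` commute, and for a fixed `i`
the rule `D_i z_i^m = z_i^m (m + D_i)` gives
`[z_i^j (c + D_i), z_i^m (d + D_i)] = z_i^(j+m) ((m d - j c) + (m - j) D_i)`.
For `c = μ + (j+1)λ`, `d = μ + (m+1)λ` one has `m d - j c = (m - j)(μ + (j+m+1)λ)`.
-/

open MvPolynomial

/-- The operator `e_j` on `T_{λ₁,μ₁} ⊗ ⋯ ⊗ T_{λ_r,μ_r} = k[z₁,…,z_r]`, acting on the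
monomial `z^ā` by multiplication by `Σ_i (a_i + μ_i + (j+1)λ_i) z_i^j`, extended linearly. -/
noncomputable def tensorWittOp {K : Type*} [Field K] {r : ℕ} (lam mu : Fin r → K) (j : ℕ)
    (f : MvPolynomial (Fin r) K) : MvPolynomial (Fin r) K :=
  ∑ a ∈ f.support,
    (∑ i : Fin r, C ((a i : K) + mu i + ((j : K) + 1) * lam i) * X i ^ j) *
      monomial a (coeff a f)

theorem sum_lie_sum_eq_sum_lie_of_ne {ι A : Type*} [Ring A] (s : Finset ι) (a b : ι → A)
    (h : ∀ i ∈ s, ∀ i' ∈ s, i ≠ i' → ⁅a i, b i'⁆ = 0) :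
    ⁅∑ i ∈ s, a i, ∑ i ∈ s, b i⁆ = ∑ i ∈ s, ⁅a i, b i⁆ := by
  let _ : LieRing A := .ofAssociativeRing
  rw [sum_lie_sum]
  exact Finset.sum_congr rfl fun i hi =>
    Finset.sum_eq_single_of_mem i hi fun i' hi' hne => h i hi i' hi' hne.symm

namespace MvPolynomial

section CommSemiring

variable {R σ : Type*} [CommSemiring R]

noncomputable def eulerOp (i : σ) : Module.End R (MvPolynomial σ R) :=
  LinearMap.mulLeft R (X i) ∘ₗ (pderiv i).toLinearMap

@[simp]
theorem eulerOp_apply (i : σ) (f : MvPolynomial σ R) : eulerOp i f = X i * pderiv i f := rfl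

theorem eulerOp_monomial (i : σ) (a : σ →₀ ℕ) (c : R) :
    eulerOp i (monomial a c) = a i • monomial a c :=
  X_mul_pderiv_monomial

theorem eulerOp_X_pow_mul (i : σ) (m : ℕ) (g : MvPolynomial σ R) :
    eulerOp i (X i ^ m * g) = X i ^ m * ((m : MvPolynomial σ R) * g + eulerOp i g) := by
  have hX : eulerOp i (X i ^ m : MvPolynomial σ R) = (m : MvPolynomial σ R) * X i ^ m := by
    rw [X_pow_eq_monomial, eulerOp_monomial, Finsupp.single_eq_same, nsmul_eq_mul]
  simp only [eulerOp_apply, pderiv_mul] at hX ⊢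
  rw [mul_add, ← mul_assoc, hX]
  ring

theorem eulerOp_X_pow_mul_of_ne {i i' : σ} (hne : i ≠ i') (m : ℕ) (g : MvPolynomial σ R) :
    eulerOp i (X i' ^ m * g) = X i' ^ m * eulerOp i g := by
  simp [pderiv_X_of_ne hne.symm, mul_left_comm]

theorem eulerOp_commute (i i' : σ) : Commute (eulerOp i : Module.End R (MvPolynomial σ R))
    (eulerOp i') := by
  refine linearMap_ext fun a => LinearMap.ext fun c => ?_
  simp only [LinearMap.comp_apply, Module.End.mul_apply, eulerOp_monomial, map_nsmul]
  exact smul_comm _ _ _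

theorem eulerOp_C_mul (i : σ) (c : R) (f : MvPolynomial σ R) :
    eulerOp i (C c * f) = C c * eulerOp i f := by
  simp only [C_mul', map_smul]

noncomputable def wittOp (c : R) (i : σ) (j : ℕ) : Module.End R (MvPolynomial σ R) :=
  LinearMap.mulLeft R (X i ^ j) ∘ₗ (c • LinearMap.id + eulerOp i)

@[simp]
theorem wittOp_apply (c : R) (i : σ) (j : ℕ) (f : MvPolynomial σ R) :
    wittOp c i j f = X i ^ j * (C c * f + eulerOp i f) := by
  simp [wittOp, C_mul']

end CommSemiring

variable {R σ : Type*} [CommRing R]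

theorem lie_wittOp_of_ne (c d : R) {i i' : σ} (hne : i ≠ i') (j m : ℕ) :
    ⁅wittOp c i j, wittOp d i' m⁆ = 0 := by
  refine LinearMap.ext fun f => ?_
  have hcomm : eulerOp i (eulerOp i' f) = eulerOp i' (eulerOp i f) :=
    LinearMap.congr_fun (eulerOp_commute i i').eq f
  simp only [Ring.lie_def, LinearMap.sub_apply, Module.End.mul_apply, wittOp_apply, map_add,
    eulerOp_X_pow_mul_of_ne hne, eulerOp_X_pow_mul_of_ne hne.symm, eulerOp_C_mul, hcomm,
    LinearMap.zero_apply]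
  ring

theorem lie_wittOp_self (c d e : R) (i : σ) (j m : ℕ)
    (h : (m : R) * d - j * c = ((m : R) - j) * e) :
    ⁅wittOp c i j, wittOp d i m⁆ = ((m : R) - j) • wittOp e i (j + m) := by
  have hC : (m : MvPolynomial σ R) * C d - (j : MvPolynomial σ R) * C c =
      ((m : MvPolynomial σ R) - (j : MvPolynomial σ R)) * C e := by
    simpa only [map_sub, map_mul, map_natCast] using congrArg (C (σ := σ)) h
  refine LinearMap.ext fun f => ?_
  simp only [Ring.lie_def, LinearMap.sub_apply, Module.End.mul_apply, wittOp_apply, map_add,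
    eulerOp_X_pow_mul, eulerOp_C_mul, LinearMap.smul_apply, smul_eq_C_mul, map_sub, map_natCast]
  linear_combination (X i ^ (j + m) * f) * hC

noncomputable def tensorWittEnd [Fintype σ] (lam mu : σ → R) (j : ℕ) :
    Module.End R (MvPolynomial σ R) :=
  ∑ i, wittOp (mu i + ((j : R) + 1) * lam i) i j

theorem lie_tensorWittEnd [Fintype σ] (lam mu : σ → R) (j m : ℕ) :
    ⁅tensorWittEnd lam mu j, tensorWittEnd lam mu m⁆ =
      ((m : R) - j) • tensorWittEnd lam mu (j + m) := by
  rw [tensorWittEnd, tensorWittEnd, tensorWittEnd, Finset.smul_sum,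
    sum_lie_sum_eq_sum_lie_of_ne _ _ _ fun i _ i' _ hne => lie_wittOp_of_ne _ _ hne _ _]
  exact Finset.sum_congr rfl fun i _ => lie_wittOp_self _ _ _ i j m (by push_cast; ring)

end MvPolynomial

theorem tensorWittOp_eq_tensorWittEnd {K : Type*} [Field K] {r : ℕ} (lam mu : Fin r → K)
    (j : ℕ) : tensorWittOp lam mu j = ⇑(tensorWittEnd lam mu j) := by
  funext f
  conv_rhs => rw [f.as_sum, map_sum]
  refine Finset.sum_congr rfl fun a _ => ?_
  rw [Finset.sum_mul, tensorWittEnd, LinearMap.sum_apply]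
  refine Finset.sum_congr rfl fun i _ => ?_
  rw [wittOp_apply, eulerOp_monomial, nsmul_eq_mul, ← map_natCast (C (σ := Fin r)),
    add_assoc (a i : K), map_add]
  ring

theorem stmt13_general (K : Type*) [Field K] (r : ℕ) (lam mu : Fin r → K)
    (j m : ℕ) (f : MvPolynomial (Fin r) K) :
    tensorWittOp lam mu j (tensorWittOp lam mu m f) -
        tensorWittOp lam mu m (tensorWittOp lam mu j f) =
      ((m : K) - (j : K)) • tensorWittOp lam mu (j + m) f := by
  simp only [tensorWittOp_eq_tensorWittEnd]
  exact LinearMap.congr_fun (lie_tensorWittEnd lam mu j m) f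

/-- the operators `e_j` above satisfy `[e_j, e_m] = (m - j) e_{j+m}` for
`j, m ≥ 1`, i.e. they define an `L₁`-module structure on `k[z₁,…,z_r]`. -/
theorem stmt13 (K : Type*) [Field K] [CharZero K] (r : ℕ) (lam mu : Fin r → K)
    (j m : ℕ) (hj : 1 ≤ j) (hm : 1 ≤ m) (f : MvPolynomial (Fin r) K) :
    tensorWittOp lam mu j (tensorWittOp lam mu m f) -
        tensorWittOp lam mu m (tensorWittOp lam mu j f) =
      ((m : K) - (j : K)) • tensorWittOp lam mu (j + m) f :=
  stmt13_general K r lam mu j m f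
end
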